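/- The Hausdorff dimension of the Cantor ternary set equals log 2 / log 3, i.e., dimH(cantorSet) = Real.logb 3 2. -/

import Mathlib

open Set MeasureTheory
open scoped ENNReal NNReal

noncomputable abbrev cDim : ℝ := Real.logb 3 2

def cDigit (b : Bool) : ℝ := if b then 1 else 0

lemma cDigit_nonneg (b : Bool) : 0 ≤ cDigit b := by cases b <;> simp [cDigit]
lemma cDigit_le_one (b : Bool) : cDigit b ≤ 1 := by cases b <;> simp [cDigit]

noncomputable def cF (a : ℕ → Bool) : ℝ := ∑' i, 2 * cDigit (a i) / 3 ^ (i + 1)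
noncomputable def cH (a : ℕ → Bool) : ℝ := ∑' i, cDigit (a i) / 2 ^ (i + 1)

lemma summable_aux (c q : ℝ) (hq0 : 0 ≤ q) (hq1 : q < 1) (f : ℕ → ℝ)
    (h0 : ∀ i, 0 ≤ f i) (h : ∀ i, f i ≤ c * q ^ (i+1)) : Summable f := by
  refine Summable.of_nonneg_of_le h0 h ?_
  have := (summable_geometric_of_lt_one hq0 hq1).mul_left (c * q)
  refine this.congr fun i => ?_
  ring

lemma summable_cF (a : ℕ → Bool) : Summable (fun i => 2 * cDigit (a i) / 3 ^ (i + 1)) := by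
  refine summable_aux 2 (1/3) (by norm_num) (by norm_num) _
    (fun i => div_nonneg (by linarith [cDigit_nonneg (a i)]) (by positivity)) (fun i => ?_)
  rw [div_pow, one_pow, mul_one_div, div_le_div_iff₀ (by positivity) (by positivity)]
  nlinarith [cDigit_le_one (a i), pow_pos (by norm_num : (0:ℝ) < 3) (i+1)]

lemma summable_cH (a : ℕ → Bool) : Summable (fun i => cDigit (a i) / 2 ^ (i + 1)) := by
  refine summable_aux 1 (1/2) (by norm_num) (by norm_num) _
    (fun i => div_nonneg (cDigit_nonneg _) (by positivity)) (fun i => ?_)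
  rw [div_pow, one_pow, one_mul, div_le_div_iff₀ (by positivity) (by positivity)]
  nlinarith [cDigit_le_one (a i), pow_pos (by norm_num : (0:ℝ) < 2) (i+1)]

lemma tsum_shift_abs_le (u : ℕ → ℝ) (hs : Summable u) (c q : ℝ) (hq0 : 0 ≤ q) (hq1 : q < 1)
    (m : ℕ) (hb : ∀ i, |u i| ≤ c * q ^ (i + 1)) :
    |∑' i, u (i + m)| ≤ c * q ^ (m + 1) / (1 - q) := by
  have hsm : Summable (fun i => u (i + m)) := (summable_nat_add_iff m).2 hs
  have habs : Summable (fun i => |u (i + m)|) := hsm.abs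
  have hgeom : Summable (fun i : ℕ => c * q ^ (m + 1) * q ^ i) :=
    (summable_geometric_of_lt_one hq0 hq1).mul_left _
  have habs' : Summable fun i => ‖u (i + m)‖ := by simpa only [Real.norm_eq_abs] using habs
  have h2 := norm_tsum_le_tsum_norm habs'
  simp only [Real.norm_eq_abs] at h2
  calc |∑' i, u (i + m)| ≤ ∑' i, |u (i + m)| := h2
    _ ≤ ∑' i : ℕ, c * q ^ (m + 1) * q ^ i := by
        refine Summable.tsum_le_tsum (fun i => ?_) habs hgeom
        calc |u (i + m)| ≤ c * q ^ (i + m + 1) := hb _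
          _ = c * q ^ (m + 1) * q ^ i := by ring
    _ = c * q ^ (m + 1) / (1 - q) := by
        rw [tsum_mul_left, tsum_geometric_of_lt_one hq0 hq1, div_eq_mul_inv]

lemma tsum_zero_head_abs_le (u : ℕ → ℝ) (hs : Summable u) (c q : ℝ) (hq0 : 0 ≤ q) (hq1 : q < 1)
    (n : ℕ) (h0 : ∀ i < n, u i = 0) (hb : ∀ i, |u i| ≤ c * q ^ (i + 1)) :
    |∑' i, u i| ≤ c * q ^ (n + 1) / (1 - q) := by
  have key := Summable.sum_add_tsum_nat_add n hs
  have hz : ∑ i ∈ Finset.range n, u i = 0 :=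
    Finset.sum_eq_zero fun i hi => h0 i (Finset.mem_range.1 hi)
  rw [hz, zero_add] at key
  rw [← key]
  exact tsum_shift_abs_le u hs c q hq0 hq1 n hb

lemma cH_sub (a b : ℕ → Bool) :
    cH a - cH b = ∑' i, (cDigit (a i) - cDigit (b i)) / 2 ^ (i + 1) := by
  rw [cH, cH, ← Summable.tsum_sub (summable_cH a) (summable_cH b)]
  congr 1; funext i; ring

lemma cF_sub (a b : ℕ → Bool) :
    cF a - cF b = ∑' i, (2 * cDigit (a i) - 2 * cDigit (b i)) / 3 ^ (i + 1) := by
  rw [cF, cF, ← Summable.tsum_sub (summable_cF a) (summable_cF b)]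
  congr 1; funext i; ring

lemma digit_sub_abs_le (x y : Bool) : |cDigit x - cDigit y| ≤ 1 := by
  cases x <;> cases y <;> simp [cDigit]

lemma summable_cH_sub (a b : ℕ → Bool) :
    Summable (fun i => (cDigit (a i) - cDigit (b i)) / 2 ^ (i + 1)) := by
  refine ((summable_cH a).sub (summable_cH b)).congr fun i => ?_; ring

lemma summable_cF_sub (a b : ℕ → Bool) :
    Summable (fun i => (2 * cDigit (a i) - 2 * cDigit (b i)) / 3 ^ (i + 1)) := by
  refine ((summable_cF a).sub (summable_cF b)).congr fun i => ?_; ring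

lemma cH_diff_le (a b : ℕ → Bool) (n : ℕ) (h : ∀ i < n, a i = b i) :
    |cH a - cH b| ≤ (1/2) ^ n := by
  rw [cH_sub]
  have H := tsum_zero_head_abs_le _ (summable_cH_sub a b) 1 (1/2) (by norm_num) (by norm_num) n
    (fun i hi => by rw [h i hi]; ring)
    (fun i => by
      calc |(cDigit (a i) - cDigit (b i)) / 2 ^ (i+1)|
          = |cDigit (a i) - cDigit (b i)| / 2 ^ (i+1) := by
            rw [abs_div, abs_of_pos (by positivity : (0:ℝ) < 2 ^ (i+1))]
        _ ≤ 1 / 2 ^ (i+1) := by gcongr; exact digit_sub_abs_le _ _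
        _ = 1 * (1/2) ^ (i+1) := by rw [div_pow]; ring)
  calc |∑' i, (cDigit (a i) - cDigit (b i)) / 2 ^ (i + 1)| ≤ 1 * (1/2)^(n+1) / (1 - 1/2) := H
    _ = (1/2)^n := by ring

lemma cF_term_abs_le (a b : ℕ → Bool) (i : ℕ) :
    |(2 * cDigit (a i) - 2 * cDigit (b i)) / 3 ^ (i + 1)| ≤ 2 * (1/3) ^ (i + 1) := by
  calc |(2 * cDigit (a i) - 2 * cDigit (b i)) / 3 ^ (i+1)|
      = |2 * cDigit (a i) - 2 * cDigit (b i)| / 3 ^ (i+1) := by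
        rw [abs_div, abs_of_pos (by positivity : (0:ℝ) < 3 ^ (i+1))]
    _ ≤ 2 / 3 ^ (i+1) := by
        gcongr
        have := digit_sub_abs_le (a i) (b i)
        calc |2 * cDigit (a i) - 2 * cDigit (b i)|
              = 2 * |cDigit (a i) - cDigit (b i)| := by
              rw [show 2 * cDigit (a i) - 2 * cDigit (b i)
                  = 2 * (cDigit (a i) - cDigit (b i)) by ring, abs_mul, abs_two]
          _ ≤ 2 := by linarith
    _ = 2 * (1/3) ^ (i+1) := by rw [div_pow]; ring

lemma cF_diff_le (a b : ℕ → Bool) (n : ℕ) (h : ∀ i < n, a i = b i) :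
    |cF a - cF b| ≤ (1/3) ^ n := by
  rw [cF_sub]
  have H := tsum_zero_head_abs_le _ (summable_cF_sub a b) 2 (1/3) (by norm_num) (by norm_num) n
    (fun i hi => by rw [h i hi]; ring) (cF_term_abs_le a b)
  calc |∑' i, (2 * cDigit (a i) - 2 * cDigit (b i)) / 3 ^ (i + 1)|
      ≤ 2 * (1/3)^(n+1) / (1 - 1/3) := H
    _ = (1/3)^n := by ring

lemma cF_diff_ge (a b : ℕ → Bool) (n : ℕ) (h : ∀ i < n, a i = b i) (hn : a n ≠ b n) :
    (1/3) ^ (n + 1) ≤ |cF a - cF b| := by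
  set u : ℕ → ℝ := fun i => (2 * cDigit (a i) - 2 * cDigit (b i)) / 3 ^ (i + 1) with hu
  have hs : Summable u := summable_cF_sub a b
  have key := Summable.sum_add_tsum_nat_add (n + 1) hs
  have hz : ∑ i ∈ Finset.range (n + 1), u i = u n := by
    rw [Finset.sum_range_succ, Finset.sum_eq_zero (fun i hi => by
      rw [hu]; simp only; rw [h i (Finset.mem_range.1 hi)]; ring), zero_add]
  rw [hz] at key
  have hun : |u n| = 2 * (1/3) ^ (n + 1) := by
    have : |2 * cDigit (a n) - 2 * cDigit (b n)| = 2 := by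
      cases hA : a n <;> cases hB : b n <;> simp_all [cDigit]
    rw [hu]; simp only
    rw [abs_div, this, abs_of_pos (by positivity : (0:ℝ) < 3 ^ (n+1)), div_pow, one_pow,
      mul_one_div]
  have htail : |∑' i, u (i + (n + 1))| ≤ (1/3) ^ (n + 1) := by
    have := tsum_shift_abs_le u hs 2 (1/3) (by norm_num) (by norm_num) (n + 1)
      (cF_term_abs_le a b)
    calc |∑' i, u (i + (n + 1))| ≤ 2 * (1/3) ^ (n + 1 + 1) / (1 - 1/3) := this
      _ = (1/3) ^ (n + 1) := by ring
  rw [cF_sub, ← key]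
  calc (1/3:ℝ) ^ (n+1) = 2 * (1/3) ^ (n+1) - (1/3) ^ (n+1) := by ring
    _ ≤ |u n| - |∑' i, u (i + (n + 1))| := by rw [hun]; linarith
    _ ≤ |u n + ∑' i, u (i + (n + 1))| := by
        have := abs_add_le (u n + ∑' i, u (i + (n+1))) (-(∑' i, u (i + (n+1))))
        simp only [add_neg_cancel_right, abs_neg] at this
        linarith

lemma cDim_pos : 0 < cDim := Real.logb_pos (by norm_num) (by norm_num)
lemma cDim_lt_one : cDim < 1 := by
  rw [cDim, Real.logb, div_lt_one (Real.log_pos (by norm_num))]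
  exact Real.log_lt_log (by norm_num) (by norm_num)

lemma three_rpow_cDim : (3:ℝ) ^ cDim = 2 :=
  Real.rpow_logb (by norm_num) (by norm_num) (by norm_num)

lemma third_rpow_cDim : ((1/3:ℝ)) ^ cDim = 1/2 := by
  rw [one_div, one_div, Real.inv_rpow (by norm_num), three_rpow_cDim]

lemma third_pow_rpow (n : ℕ) : ((1/3:ℝ) ^ n) ^ cDim = (1/2) ^ n := by
  rw [← Real.rpow_natCast (1/3:ℝ) n, ← Real.rpow_mul (by norm_num), mul_comm,
    Real.rpow_mul (by norm_num), third_rpow_cDim, Real.rpow_natCast]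

/-- Key Hölder estimate for the Cantor function on the Cantor set. -/
lemma cH_holder (a b : ℕ → Bool) : |cH a - cH b| ≤ 2 * |cF a - cF b| ^ cDim := by
  by_cases hab : a = b
  · subst hab
    simp only [sub_self, abs_zero]
    positivity
  · have hex : ∃ n, a n ≠ b n := by
      by_contra hc
      push_neg at hc
      exact hab (funext hc)
    set n := Nat.find hex with hn
    have h1 : ∀ i < n, a i = b i := fun i hi => by
      by_contra hne
      exact absurd hi (not_lt.2 (Nat.find_le hne))
    have h2 : a n ≠ b n := Nat.find_spec hex
    have hF := cF_diff_ge a b n h1 h2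
    have hH := cH_diff_le a b n h1
    calc |cH a - cH b| ≤ (1/2) ^ n := hH
      _ = 2 * ((1/3:ℝ) ^ (n+1)) ^ cDim := by rw [third_pow_rpow]; ring
      _ ≤ 2 * |cF a - cF b| ^ cDim := by
          have := Real.rpow_le_rpow (by positivity : (0:ℝ) ≤ (1/3)^(n+1)) hF cDim_pos.le
          linarith

lemma tsum_geo_aux (c q : ℝ) (hq0 : 0 ≤ q) (hq1 : q < 1) :
    ∑' i : ℕ, c * q ^ (i + 1) = c * q / (1 - q) := by
  have : ∀ i : ℕ, c * q ^ (i + 1) = (c * q) * q ^ i := fun i => by ring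
  simp_rw [this]
  rw [tsum_mul_left, tsum_geometric_of_lt_one hq0 hq1, div_eq_mul_inv]

lemma cF_nonneg (a : ℕ → Bool) : 0 ≤ cF a :=
  tsum_nonneg fun i => div_nonneg (by linarith [cDigit_nonneg (a i)]) (by positivity)

lemma cF_le_one (a : ℕ → Bool) : cF a ≤ 1 := by
  have hsg : Summable (fun i : ℕ => 2 * (1/3:ℝ) ^ (i+1)) :=
    ((summable_geometric_of_lt_one (by norm_num) (by norm_num : (1/3:ℝ) < 1)).mul_left
      (2 * (1/3:ℝ))).congr (fun i => by ring)
  have hle : ∀ i : ℕ, 2 * cDigit (a i) / 3 ^ (i+1) ≤ 2 * (1/3:ℝ) ^ (i+1) := fun i => by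
    rw [div_pow, one_pow, mul_one_div]
    gcongr
    linarith [cDigit_le_one (a i)]
  have h := Summable.tsum_le_tsum hle (summable_cF a) hsg
  rw [tsum_geo_aux 2 (1/3) (by norm_num) (by norm_num)] at h
  calc cF a ≤ 2 * (1/3) / (1 - 1/3) := h
    _ = 1 := by norm_num

lemma cF_shift (a : ℕ → Bool) : cF a = (2 * cDigit (a 0) + cF (fun i => a (i + 1))) / 3 := by
  have h := Summable.tsum_eq_zero_add (summable_cF a)
  rw [cF, h]
  have : ∀ i : ℕ, 2 * cDigit (a (i + 1)) / 3 ^ (i + 1 + 1)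
      = (1/3) * (2 * cDigit (a (i + 1)) / 3 ^ (i + 1)) := fun i => by
    rw [pow_succ]; ring
  simp_rw [this]
  rw [tsum_mul_left]
  rw [cF]
  ring

lemma cF_mem_preCantorSet (n : ℕ) (a : ℕ → Bool) : cF a ∈ preCantorSet n := by
  induction n generalizing a with
  | zero => exact ⟨cF_nonneg a, cF_le_one a⟩
  | succ n ih =>
    rw [preCantorSet_succ]
    cases ha : a 0 with
    | false =>
      left
      refine ⟨cF (fun i => a (i + 1)), ih _, ?_⟩
      rw [cF_shift a, ha]
      simp [cDigit]
    | true =>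
      right
      refine ⟨cF (fun i => a (i + 1)), ih _, ?_⟩
      rw [cF_shift a, ha]
      simp [cDigit, add_comm]

lemma range_cF_subset : Set.range cF ⊆ cantorSet := by
  rintro x ⟨a, rfl⟩
  exact Set.mem_iInter.2 fun n => cF_mem_preCantorSet n a

noncomputable def bSeq (x : ℝ) : ℕ → ℝ
  | 0 => x
  | n + 1 => if 1 ≤ 2 * bSeq x n then 2 * bSeq x n - 1 else 2 * bSeq x n

noncomputable def bDig (x : ℝ) (n : ℕ) : Bool := decide (1 ≤ 2 * bSeq x n)

lemma bSeq_mem (x : ℝ) (hx : x ∈ Icc (0:ℝ) 1) (n : ℕ) : bSeq x n ∈ Icc (0:ℝ) 1 := by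
  induction n with
  | zero => exact hx
  | succ n ih =>
    obtain ⟨h0, h1⟩ := ih
    rw [bSeq]
    split_ifs with h
    · exact ⟨by linarith, by linarith⟩
    · push_neg at h
      exact ⟨by linarith, by linarith⟩

lemma bSeq_key (x : ℝ) (n : ℕ) :
    x = ∑ i ∈ Finset.range n, cDigit (bDig x i) / 2 ^ (i + 1) + bSeq x n / 2 ^ n := by
  induction n with
  | zero => simp [bSeq]
  | succ n ih =>
    rw [Finset.sum_range_succ]
    conv_lhs => rw [ih]
    have hstep : bSeq x (n + 1) = if 1 ≤ 2 * bSeq x n then 2 * bSeq x n - 1 else 2 * bSeq x n :=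
      rfl
    have hd : cDigit (bDig x n) = if 1 ≤ 2 * bSeq x n then (1:ℝ) else 0 := by
      rw [bDig, cDigit]
      by_cases h : 1 ≤ 2 * bSeq x n <;> simp [h]
    rw [hstep, hd]
    split_ifs with h <;> rw [pow_succ] <;> ring

lemma cH_surj {x : ℝ} (hx : x ∈ Icc (0:ℝ) 1) : cH (bDig x) = x := by
  have hs := (summable_cH (bDig x)).hasSum
  have ht := hs.tendsto_sum_nat
  have h2 : Filter.Tendsto (fun n => ∑ i ∈ Finset.range n, cDigit (bDig x i) / 2 ^ (i + 1))
      Filter.atTop (nhds x) := by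
    have heq : ∀ n, ∑ i ∈ Finset.range n, cDigit (bDig x i) / 2 ^ (i + 1)
        = x - bSeq x n / 2 ^ n := fun n => by
      have := bSeq_key x n
      linarith
    simp_rw [heq]
    have h3 : Filter.Tendsto (fun n : ℕ => bSeq x n / 2 ^ n) Filter.atTop (nhds 0) := by
      have hb : ∀ n : ℕ, bSeq x n / 2 ^ n ≤ (1/2 : ℝ) ^ n := fun n => by
        rw [div_pow, one_pow]
        gcongr
        exact (bSeq_mem x hx n).2
      apply squeeze_zero (fun n => div_nonneg (bSeq_mem x hx n).1 (by positivity)) hb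
      exact tendsto_pow_atTop_nhds_zero_of_lt_one (by norm_num) (by norm_num)
    have := Filter.Tendsto.const_sub x h3
    simpa using this
  exact tendsto_nhds_unique ht h2

noncomputable def cC : ℝ → ℝ := cH ∘ Function.invFun cF

lemma cH_eq_of_cF_eq {a b : ℕ → Bool} (h : cF a = cF b) : cH a = cH b := by
  have := cH_holder a b
  rw [h, sub_self, abs_zero, Real.zero_rpow cDim_pos.ne', mul_zero] at this
  have h2 := abs_nonneg (cH a - cH b)
  rw [abs_sub_le_iff] at this
  linarith [this.1, this.2]

lemma cC_cF (a : ℕ → Bool) : cC (cF a) = cH a := by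
  have h : cF (Function.invFun cF (cF a)) = cF a := Function.invFun_eq ⟨a, rfl⟩
  exact cH_eq_of_cF_eq h

lemma Icc_subset_cC_image : Icc (0:ℝ) 1 ⊆ cC '' (Set.range cF) := by
  intro x hx
  exact ⟨cF (bDig x), ⟨bDig x, rfl⟩, by rw [cC_cF, cH_surj hx]⟩

noncomputable def cDimN : NNReal := ⟨cDim, cDim_pos.le⟩

lemma cC_holder : HolderOnWith 2 cDimN cC (Set.range cF) := by
  rintro x ⟨a, rfl⟩ y ⟨b, rfl⟩
  rw [cC_cF, cC_cF]
  have key : |cH a - cH b| ≤ 2 * |cF a - cF b| ^ cDim := cH_holder a b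
  rw [edist_dist, edist_dist, Real.dist_eq, Real.dist_eq]
  calc ENNReal.ofReal |cH a - cH b| ≤ ENNReal.ofReal (2 * |cF a - cF b| ^ cDim) :=
        ENNReal.ofReal_le_ofReal key
    _ = 2 * ENNReal.ofReal |cF a - cF b| ^ (cDimN : ℝ) := by
        rw [ENNReal.ofReal_mul (by norm_num), ENNReal.ofReal_ofNat,
          ← ENNReal.ofReal_rpow_of_nonneg (abs_nonneg _) cDim_pos.le]
        rfl

lemma dimH_lower : ENNReal.ofReal cDim ≤ dimH cantorSet := by
  have h1 : dimH (Icc (0:ℝ) 1) = 1 := by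
    rw [Real.dimH_of_nonempty_interior (by rw [interior_Icc]; exact ⟨1/2, by norm_num, by norm_num⟩ :
      (interior (Icc (0:ℝ) 1)).Nonempty)]
    simp
  have h2 : dimH (Icc (0:ℝ) 1) ≤ dimH (cC '' Set.range cF) := dimH_mono Icc_subset_cC_image
  have h3 : dimH (cC '' Set.range cF) ≤ dimH (Set.range cF) / cDimN :=
    cC_holder.dimH_image_le (NNReal.coe_lt_coe.1 cDim_pos)
  have h4 : dimH (Set.range cF) ≤ dimH cantorSet := dimH_mono range_cF_subset
  have h5 : (1:ℝ≥0∞) ≤ dimH cantorSet / cDimN := by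
    calc (1:ℝ≥0∞) = dimH (Icc (0:ℝ) 1) := h1.symm
      _ ≤ dimH (Set.range cF) / cDimN := h2.trans h3
      _ ≤ dimH cantorSet / cDimN := by gcongr
  have h6 : (cDimN : ℝ≥0∞) ≤ dimH cantorSet := by
    rw [ENNReal.le_div_iff_mul_le] at h5
    · simpa using h5
    · left
      simp only [ne_eq, ENNReal.coe_eq_zero]
      exact fun h => absurd (congrArg NNReal.toReal h) (by exact cDim_pos.ne')
    · left
      exact ENNReal.coe_ne_top
  calc ENNReal.ofReal cDim = (cDimN : ℝ≥0∞) := by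
        rw [ENNReal.ofReal]
        congr 1
        exact NNReal.coe_injective (by simp [cDimN, Real.coe_toNNReal _ cDim_pos.le]; rfl)
    _ ≤ dimH cantorSet := h6

noncomputable def cQ (n : ℕ) (w : Fin n → Bool) : ℝ := ∑ i : Fin n, 2 * cDigit (w i) / 3 ^ (i.1 + 1)

noncomputable def cJ (n : ℕ) (w : Fin n → Bool) : Set ℝ := Icc (cQ n w) (cQ n w + (1/3) ^ n)

lemma cQ_cons (n : ℕ) (b : Bool) (w : Fin n → Bool) :
    cQ (n + 1) (Fin.cons b w) = (2 * cDigit b + cQ n w) / 3 := by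
  rw [cQ, Fin.sum_univ_succ]
  simp only [Fin.cons_zero, Fin.cons_succ, Fin.val_succ, Fin.val_zero]
  rw [cQ, add_div, Finset.sum_div]
  congr 1
  · norm_num
  · refine Finset.sum_congr rfl fun i _ => ?_
    rw [pow_succ]
    ring

lemma preCantorSet_subset_iUnion_cJ (n : ℕ) : preCantorSet n ⊆ ⋃ w : Fin n → Bool, cJ n w := by
  induction n with
  | zero =>
    intro x hx
    refine Set.mem_iUnion.2 ⟨fun i => i.elim0, ?_⟩
    simpa [cJ, cQ] using hx
  | succ n ih =>
    rintro x (⟨y, hy, rfl⟩ | ⟨y, hy, rfl⟩)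
    · obtain ⟨w, hw⟩ := Set.mem_iUnion.1 (ih hy)
      refine Set.mem_iUnion.2 ⟨Fin.cons false w, ?_⟩
      obtain ⟨hl, hr⟩ := hw
      constructor
      · rw [cQ_cons]
        simp only [cDigit, Bool.false_eq_true, if_false, mul_zero, zero_add]
        linarith
      · rw [cQ_cons]
        simp only [cDigit, Bool.false_eq_true, if_false, mul_zero, zero_add, pow_succ]
        nlinarith [pow_pos (show (0:ℝ) < 1/3 by norm_num) n]
    · obtain ⟨w, hw⟩ := Set.mem_iUnion.1 (ih hy)
      refine Set.mem_iUnion.2 ⟨Fin.cons true w, ?_⟩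
      obtain ⟨hl, hr⟩ := hw
      constructor
      · rw [cQ_cons]
        simp only [cDigit, if_true]
        linarith
      · rw [cQ_cons]
        simp only [cDigit, if_true, pow_succ]
        nlinarith [pow_pos (show (0:ℝ) < 1/3 by norm_num) n]

lemma dimH_upper : dimH cantorSet ≤ ENNReal.ofReal cDim := by
  have hmeas : μH[cDim] cantorSet ≤ 1 := by
    have H := MeasureTheory.Measure.hausdorffMeasure_le_liminf_sum (X := ℝ) cDim cantorSet
      (l := Filter.atTop) (fun n => ENNReal.ofReal ((1/3:ℝ) ^ n)) ?_ cJ ?_ ?_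
    · refine H.trans ?_
      have hsum : ∀ n : ℕ, ∑ w : Fin n → Bool, Metric.ediam (cJ n w) ^ cDim = 1 := by
        intro n
        have hdiam : ∀ w : Fin n → Bool, Metric.ediam (cJ n w) = ENNReal.ofReal ((1/3)^n) := by
          intro w
          rw [cJ, Real.ediam_Icc]
          congr 1
          ring
        simp_rw [hdiam]
        rw [Finset.sum_const, Finset.card_univ, Fintype.card_fun, Fintype.card_bool,
          Fintype.card_fin, nsmul_eq_mul,
          ENNReal.ofReal_rpow_of_nonneg (by positivity) cDim_pos.le, third_pow_rpow,
          ← ENNReal.ofReal_natCast (2^n), ← ENNReal.ofReal_mul (by positivity),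
          ← ENNReal.ofReal_one]
        congr 1
        push_cast
        rw [mul_comm, div_pow, one_pow, div_mul_cancel₀]
        positivity
      simp_rw [hsum]
      simp
    · rw [show (0:ℝ≥0∞) = ENNReal.ofReal 0 by simp]
      exact ENNReal.tendsto_ofReal (tendsto_pow_atTop_nhds_zero_of_lt_one (by norm_num)
        (by norm_num))
    · filter_upwards with n w
      rw [cJ, Real.ediam_Icc]
      apply ENNReal.ofReal_le_ofReal
      linarith
    · filter_upwards with n
      exact fun x hx => preCantorSet_subset_iUnion_cJ n (Set.mem_iInter.1 hx n)
  have : dimH cantorSet ≤ (cDim.toNNReal : ℝ≥0∞) := by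
    apply dimH_le_of_hausdorffMeasure_ne_top
    rw [Real.coe_toNNReal _ cDim_pos.le]
    exact (hmeas.trans_lt (by norm_num)).ne
  rwa [ENNReal.ofReal]

theorem dimH_cantorSet : dimH cantorSet = ENNReal.ofReal (Real.logb 3 2) := by
  exact le_antisymm dimH_upper dimH_lower
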